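/- The map Σ ↦ Σ Cᵀ (C Σ Cᵀ + R)⁻¹ C Σ, defined on the cone of symmetric positive definite n×n matrices, is convex with respect to the Loewner order: for Σ₁, Σ₂ positive definite and t ∈ [0,1], f(tΣ₁ + (1−t)Σ₂) ⪯ t f(Σ₁) + (1−t) f(Σ₂). -/

import Mathlib

/-!
The block matrix `[[A, B], [Bᴴ, D]]` with `A ≻ 0` is positive semidefinite exactly when
`Bᴴ A⁻¹ B ⪯ D` (Schur complement), and it depends linearly on `(A, B, D)`. Taking `D = Bᴴ A⁻¹ B`
and a convex combination of two such block matrices shows that `(A, B) ↦ Bᴴ A⁻¹ B` is jointly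
Loewner-convex on `A ≻ 0`. For Hermitian `Σ` the Kalman update is this function evaluated at the
affine image `(C Σ Cᴴ + R, C Σ)`, hence convex as well.
-/

open Matrix

namespace Matrix

open scoped MatrixOrder ComplexOrder

variable {m n 𝕜 : Type*} [RCLike 𝕜]

theorem convex_setOf_posDef : Convex ℝ {A : Matrix m m 𝕜 | A.PosDef} := by
  intro A hA B hB a b ha hb hab
  rcases ha.eq_or_lt with rfl | ha
  · simpa [show b = 1 by linarith] using hB
  · exact (hA.smul ha).add_posSemidef (hB.posSemidef.smul hb)

section Inverse

variable [Fintype m] [DecidableEq m]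

theorem PosDef.posSemidef_fromBlocks_conjTranspose_mul_inv_mul [Finite n] {A : Matrix m m 𝕜}
    (hA : A.PosDef) (B : Matrix m n 𝕜) :
    (fromBlocks A B Bᴴ (Bᴴ * A⁻¹ * B)).PosSemidef := by
  have := hA.isUnit.invertible
  rw [hA.fromBlocks₁₁, sub_self]
  exact PosSemidef.zero

theorem convexOn_conjTranspose_mul_inv_mul [Finite n] :
    ConvexOn ℝ {p : Matrix m m 𝕜 × Matrix m n 𝕜 | p.1.PosDef} fun p ↦ p.2ᴴ * p.1⁻¹ * p.2 := by
  refine ⟨fun _ h₁ _ h₂ _ _ ha hb hab ↦ convex_setOf_posDef h₁ h₂ ha hb hab, ?_⟩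
  rintro ⟨A₁, B₁⟩ (hA₁ : A₁.PosDef) ⟨A₂, B₂⟩ (hA₂ : A₂.PosDef) a b ha hb hab
  have hA : (a • A₁ + b • A₂).PosDef := convex_setOf_posDef hA₁ hA₂ ha hb hab
  have := hA.isUnit.invertible
  have h := ((hA₁.posSemidef_fromBlocks_conjTranspose_mul_inv_mul B₁).smul ha).add
    ((hA₂.posSemidef_fromBlocks_conjTranspose_mul_inv_mul B₂).smul hb)
  rw [fromBlocks_smul, fromBlocks_smul, fromBlocks_add] at h
  have hB : (a • B₁ + b • B₂)ᴴ = a • B₁ᴴ + b • B₂ᴴ := by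
    simp [conjTranspose_smul]
  simp only [le_iff, Prod.smul_mk, Prod.mk_add_mk]
  rwa [← hA.fromBlocks₁₁, hB]

noncomputable def kalmanUpdate [Fintype n] (C : Matrix m n 𝕜) (R : Matrix m m 𝕜)
    (S : Matrix n n 𝕜) : Matrix n n 𝕜 :=
  S * Cᴴ * (C * S * Cᴴ + R)⁻¹ * (C * S)

theorem convexOn_kalmanUpdate [Fintype n] (C : Matrix m n 𝕜)
    {R : Matrix m m 𝕜} (hR : R.PosDef) :
    ConvexOn ℝ {S : Matrix n n 𝕜 | S.PosDef} (kalmanUpdate C R) := by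
  have hM {S : Matrix n n 𝕜} (hS : S.PosDef) : (C * S * Cᴴ + R).PosDef :=
    PosDef.posSemidef_add (hS.posSemidef.mul_mul_conjTranspose_same C) hR
  have hK {S : Matrix n n 𝕜} (hS : S.PosDef) :
      kalmanUpdate C R S = (C * S)ᴴ * (C * S * Cᴴ + R)⁻¹ * (C * S) := by
    rw [kalmanUpdate, conjTranspose_mul, hS.isHermitian.eq]
  refine ⟨convex_setOf_posDef, fun S₁ hS₁ S₂ hS₂ a b ha hb hab ↦ ?_⟩
  have hS : (a • S₁ + b • S₂).PosDef := convex_setOf_posDef hS₁ hS₂ ha hb hab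
  have h := convexOn_conjTranspose_mul_inv_mul.2
    (x := (C * S₁ * Cᴴ + R, C * S₁)) (hM hS₁) (y := (C * S₂ * Cᴴ + R, C * S₂)) (hM hS₂) ha hb hab
  have hCS : C * (a • S₁ + b • S₂) = a • (C * S₁) + b • (C * S₂) := by
    rw [Matrix.mul_add, Matrix.mul_smul, Matrix.mul_smul]
  have hMS :
      C * (a • S₁ + b • S₂) * Cᴴ + R = a • (C * S₁ * Cᴴ + R) + b • (C * S₂ * Cᴴ + R) := by
    rw [hCS, Matrix.add_mul, Matrix.smul_mul, Matrix.smul_mul]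
    linear_combination (norm := module) -(hab • R)
  rw [hK hS₁, hK hS₂, hK hS, hMS, hCS]
  exact h

end Inverse

end Matrix

/-- The Kalman-update map `Σ ↦ Σ Cᵀ (C Σ Cᵀ + R)⁻¹ C Σ` is convex on positive
definite matrices with respect to the Loewner order. -/
theorem kalman_update_convex
    {n m : ℕ} (C : Matrix (Fin m) (Fin n) ℝ) (R : Matrix (Fin m) (Fin m) ℝ)
    (hR : R.PosDef)
    (f : Matrix (Fin n) (Fin n) ℝ → Matrix (Fin n) (Fin n) ℝ)
    (hf : ∀ S, f S = S * Cᵀ * (C * S * Cᵀ + R)⁻¹ * (C * S))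
    (S₁ S₂ : Matrix (Fin n) (Fin n) ℝ) (hS₁ : S₁.PosDef) (hS₂ : S₂.PosDef)
    (t : ℝ) (ht0 : 0 ≤ t) (ht1 : t ≤ 1) :
    (t • f S₁ + (1 - t) • f S₂ - f (t • S₁ + (1 - t) • S₂)).PosSemidef := by
  obtain rfl : f = kalmanUpdate C R :=
    funext fun S ↦ by rw [hf, kalmanUpdate, conjTranspose_eq_transpose_of_trivial]
  exact le_iff.1 <| (convexOn_kalmanUpdate C hR).2 hS₁ hS₂ ht0 (sub_nonneg.2 ht1) (by ring)
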